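/- arXiv:2012.12472 — 4 statements merged into one kernel-verified Lean document; each statement's English description precedes it below -/
import Mathlib

section
/- Define the LCFS-PR conditional average AoI formula via the general AoI identity: if M ~ Geo(ξ) and N ~ Geo(μ) are independent with 0 < ξ < μ < 1, then (1/2)·E[M²]/E[M] + E[min(N,M)]/P(N ≤ M) − 1/2 = 1/ξ + 1/μ − 1. -/
open Finset

/-!
Write `M = m + 1` and `N = n + 1`. The first two moments of `Geo(ξ)` are `E[M] = 1/ξ` and
`E[M²] = (2 - ξ)/ξ²`, so the first term is `1/ξ - 1/2`. For fixed `m`,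
`min(m + 1, N) = ∑_{k ≤ m} 1{N > k}` and `P(N > k) = (1 - μ)^k`, hence
`E[min(m + 1, N)] = (1 - (1 - μ)^(m + 1))/μ = P(N ≤ m + 1)/μ`. Averaging over `M` gives
`E[min(N, M)] = P(N ≤ M)/μ` whatever the law of `M`, so the second quotient is `1/μ`.
-/

theorem HasSum.of_nonneg_of_prod_fiberwise {β γ : Type*} {f : β × γ → ℝ} {g : β → ℝ} {a : ℝ}
    (hf : 0 ≤ f) (hfib : ∀ b, HasSum (fun c ↦ f (b, c)) (g b)) (hg : HasSum g a) :
    HasSum f a := by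
  have hs : Summable f := (summable_prod_of_nonneg hf).2
    ⟨fun b ↦ (hfib b).summable, by simpa only [(hfib _).tsum_eq] using hg.summable⟩
  exact (hs.hasSum.prod_fiberwise hfib).unique hg ▸ hs.hasSum

section Geometric

variable {r p : ℝ}

theorem hasSum_succ_mul_geometric (hr : |r| < 1) :
    HasSum (fun n : ℕ ↦ ((n : ℝ) + 1) * r ^ n) (1 / (1 - r) ^ 2) := by
  simpa using hasSum_choose_mul_geometric_of_norm_lt_one 1 (r := r) (by rwa [Real.norm_eq_abs])

theorem hasSum_succ_sq_mul_geometric (hr : |r| < 1) :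
    HasSum (fun n : ℕ ↦ ((n : ℝ) + 1) ^ 2 * r ^ n) ((1 + r) / (1 - r) ^ 3) := by
  have hr1 : 1 - r ≠ 0 := sub_ne_zero.2 fun h ↦ by simp [← h] at hr
  have h2 := hasSum_choose_mul_geometric_of_norm_lt_one 2 (r := r) (by rwa [Real.norm_eq_abs])
  rw [show (1 + r) / (1 - r) ^ 3 = 2 * (1 / (1 - r) ^ 3) - 1 / (1 - r) ^ 2 by field_simp; ring]
  refine ((h2.mul_left 2).sub (hasSum_succ_mul_geometric hr)).congr_fun fun n ↦ ?_
  rw [Nat.cast_choose_two]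
  push_cast
  ring

theorem hasSum_succ_mul_geometricWeight (hp : |1 - p| < 1) :
    HasSum (fun n : ℕ ↦ ((n : ℝ) + 1) * (p * (1 - p) ^ n)) (1 / p) := by
  have hp0 : p ≠ 0 := by rintro rfl; simp at hp
  rw [show 1 / p = p * (1 / (1 - (1 - p)) ^ 2) by rw [sub_sub_cancel]; field_simp]
  exact ((hasSum_succ_mul_geometric hp).mul_left p).congr_fun fun n ↦ by ring

theorem hasSum_succ_sq_mul_geometricWeight (hp : |1 - p| < 1) :
    HasSum (fun n : ℕ ↦ ((n : ℝ) + 1) ^ 2 * (p * (1 - p) ^ n)) ((2 - p) / p ^ 2) := by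
  have hp0 : p ≠ 0 := by rintro rfl; simp at hp
  rw [show (2 - p) / p ^ 2 = p * ((1 + (1 - p)) / (1 - (1 - p)) ^ 3) by rw [sub_sub_cancel]; field_simp; ring]
  exact ((hasSum_succ_sq_mul_geometric hp).mul_left p).congr_fun fun n ↦ by ring

theorem hasSum_geometricWeight_tail (hp : |1 - p| < 1) (k : ℕ) :
    HasSum (fun n : ℕ ↦ if k ≤ n then p * (1 - p) ^ n else 0) ((1 - p) ^ k) := by
  have hp0 : p ≠ 0 := by rintro rfl; simp at hp
  rw [← hasSum_nat_add_iff' k, sum_eq_zero fun i hi ↦ if_neg (by simpa using hi), sub_zero,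
    show (1 - p) ^ k = p * (1 - p) ^ k * (1 - (1 - p))⁻¹ by rw [sub_sub_cancel]; field_simp]
  refine ((hasSum_geometric_of_abs_lt_one hp).mul_left _).congr_fun fun n ↦ ?_
  rw [if_pos (Nat.le_add_left k n), pow_add]
  ring

theorem hasSum_ite_le_geometricWeight (hp : |1 - p| < 1) (m : ℕ) :
    HasSum (fun n : ℕ ↦ if n ≤ m then p * (1 - p) ^ n else 0) (1 - (1 - p) ^ (m + 1)) := by
  rw [← pow_zero (1 - p)]
  refine ((hasSum_geometricWeight_tail hp 0).sub
    (hasSum_geometricWeight_tail hp (m + 1))).congr_fun fun n ↦ ?_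
  by_cases hn : n ≤ m
  · simp [hn, show ¬ m + 1 ≤ n by omega]
  · simp [hn, show m + 1 ≤ n by omega]

theorem hasSum_min_mul_geometricWeight (hp : |1 - p| < 1) (m : ℕ) :
    HasSum (fun n : ℕ ↦ min ((m : ℝ) + 1) ((n : ℝ) + 1) * (p * (1 - p) ^ n))
      ((1 - (1 - p) ^ (m + 1)) / p) := by
  have hp0 : p ≠ 0 := by rintro rfl; simp at hp
  have hmin : ∀ n : ℕ, min ((m : ℝ) + 1) ((n : ℝ) + 1) * (p * (1 - p) ^ n)
      = ∑ k ∈ range (m + 1), if k ≤ n then p * (1 - p) ^ n else 0 := by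
    intro n
    rw [sum_ite, sum_const_zero, add_zero, sum_const, nsmul_eq_mul]
    congr 1
    have : (range (m + 1)).filter (· ≤ n) = range (min (m + 1) (n + 1)) := by
      ext k; simp only [mem_filter, mem_range]; omega
    rw [this, card_range]
    norm_cast
  simp_rw [hmin]
  convert hasSum_sum fun k _ ↦ hasSum_geometricWeight_tail hp k using 1
  rw [div_eq_iff hp0, mul_comm, ← mul_neg_geom_sum, sub_sub_cancel]

end Geometric

section Joint

variable {a : ℕ → ℝ} {μ : ℝ}

theorem summable_mul_one_sub_pow_succ {t : ℝ} (ha : 0 ≤ a) (ha' : Summable a) (ht0 : 0 ≤ t)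
    (ht1 : t ≤ 1) : Summable fun m ↦ a m * (1 - t ^ (m + 1)) :=
  ha'.of_nonneg_of_le (fun m ↦ mul_nonneg (ha m) (sub_nonneg.2 (pow_le_one₀ ht0 ht1)))
    fun m ↦ mul_le_of_le_one_right (ha m) (sub_le_self _ (pow_nonneg ht0 _))

theorem hasSum_ite_le_mul_geometricWeight (ha : 0 ≤ a) (ha' : Summable a) (hμ0 : 0 < μ)
    (hμ1 : μ ≤ 1) :
    HasSum (fun q : ℕ × ℕ ↦ if q.2 ≤ q.1 then a q.1 * (μ * (1 - μ) ^ q.2) else 0)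
      (∑' m, a m * (1 - (1 - μ) ^ (m + 1))) := by
  have hμ : |1 - μ| < 1 := abs_sub_lt_iff.2 ⟨by linarith, by linarith⟩
  refine HasSum.of_nonneg_of_prod_fiberwise (fun q ↦ ?_) (fun m ↦ ?_)
    (summable_mul_one_sub_pow_succ ha ha' (by linarith) (by linarith)).hasSum
  · dsimp only
    split_ifs
    · exact mul_nonneg (ha _) (mul_nonneg hμ0.le (pow_nonneg (by linarith) _))
    · exact le_rfl
  · refine ((hasSum_ite_le_geometricWeight hμ m).mul_left (a m)).congr_fun fun n ↦ ?_
    dsimp only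
    split_ifs <;> simp

theorem hasSum_min_mul_geometricWeight_prod (ha : 0 ≤ a) (ha' : Summable a) (hμ0 : 0 < μ)
    (hμ1 : μ ≤ 1) :
    HasSum (fun q : ℕ × ℕ ↦ min ((q.1 : ℝ) + 1) ((q.2 : ℝ) + 1) * (a q.1 * (μ * (1 - μ) ^ q.2)))
      ((∑' m, a m * (1 - (1 - μ) ^ (m + 1))) / μ) := by
  have hμ : |1 - μ| < 1 := abs_sub_lt_iff.2 ⟨by linarith, by linarith⟩
  refine HasSum.of_nonneg_of_prod_fiberwise (fun q ↦ ?_) (fun m ↦ ?_)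
    ((summable_mul_one_sub_pow_succ ha ha' (by linarith) (by linarith)).hasSum.div_const μ)
  · exact mul_nonneg (le_min (by positivity) (by positivity))
      (mul_nonneg (ha _) (mul_nonneg hμ0.le (pow_nonneg (by linarith) _)))
  · rw [mul_div_assoc]
    exact ((hasSum_min_mul_geometricWeight hμ m).mul_left (a m)).congr_fun fun n ↦ by ring

end Joint

/-- LCFS-PR conditional average AoI identity: for independent `M ~ Geo(ξ)`,
`N ~ Geo(μ)` with `0 < ξ < μ < 1`,
`(1/2)·E[M²]/E[M] + E[min(N,M)]/P(N ≤ M) − 1/2 = 1/ξ + 1/μ − 1`. -/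
theorem stmt_6 (ξ μ : ℝ) (hξ : 0 < ξ) (hξμ : ξ < μ) (hμ : μ < 1) :
    (1 / 2) * (∑' m : ℕ, ((m : ℝ) + 1) ^ 2 * (ξ * (1 - ξ) ^ m))
        / (∑' m : ℕ, ((m : ℝ) + 1) * (ξ * (1 - ξ) ^ m))
      + (∑' q : ℕ × ℕ, ((min (q.1 + 1) (q.2 + 1) : ℝ)) *
          ((ξ * (1 - ξ) ^ q.1) * (μ * (1 - μ) ^ q.2)))
        / (∑' q : ℕ × ℕ, (if q.2 ≤ q.1 then
            (ξ * (1 - ξ) ^ q.1) * (μ * (1 - μ) ^ q.2) else 0))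
      - 1 / 2
    = 1 / ξ + 1 / μ - 1 := by
  have hμ0 : 0 < μ := hξ.trans hξμ
  have hξ' : |1 - ξ| < 1 := abs_sub_lt_iff.2 ⟨by linarith, by linarith⟩
  have hw : 0 ≤ fun m : ℕ ↦ ξ * (1 - ξ) ^ m := fun m ↦ mul_nonneg hξ.le (pow_nonneg (by linarith) _)
  have hw' : Summable fun m : ℕ ↦ ξ * (1 - ξ) ^ m := (summable_geometric_of_abs_lt_one hξ').mul_left ξ
  have hS : 0 < ∑' m : ℕ, ξ * (1 - ξ) ^ m * (1 - (1 - μ) ^ (m + 1)) :=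
    (summable_mul_one_sub_pow_succ hw hw' (by linarith) (by linarith)).tsum_pos
      (fun m ↦ mul_nonneg (hw m) (sub_nonneg.2 (pow_le_one₀ (by linarith) (by linarith)))) 0
      (by simpa using mul_pos hξ hμ0)
  rw [(hasSum_succ_sq_mul_geometricWeight hξ').tsum_eq, (hasSum_succ_mul_geometricWeight hξ').tsum_eq,
    (hasSum_min_mul_geometricWeight_prod hw hw' hμ0 hμ.le).tsum_eq,
    (hasSum_ite_le_mul_geometricWeight hw hw' hμ0 hμ.le).tsum_eq]
  field_simp
  ring
end

section
/- If M ~ Geo(ξ) and N ~ Geo(μ) are independent geometric random variables on {1,2,...} with ξ, μ ∈ (0,1), then E[M]/P(N ≤ M) + E[N·1{N ≤ M}]/P(N ≤ M) − 1 = 1/ξ + 1/μ + 1/(1-(1-ξ)(1-μ)) − 2. -/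
private lemma summable_np1 (r : ℝ) (hr0 : 0 ≤ r) (hr1 : r < 1) :
    Summable (fun n : ℕ => ((n : ℝ) + 1) * r ^ n) := by
  have hr : ‖r‖ < 1 := by rwa [Real.norm_eq_abs, abs_of_nonneg hr0]
  have hs1 : Summable (fun n : ℕ => (n : ℝ) * r ^ n) :=
    (summable_pow_mul_geometric_of_norm_lt_one 1 hr).congr (by intro n; push_cast; ring)
  have hs2 : Summable (fun n : ℕ => r ^ n) := summable_geometric_of_lt_one hr0 hr1
  exact (hs1.add hs2).congr (by intro n; ring)

private lemma geom_shift (a c : ℝ) (ha0 : 0 ≤ a) (ha1 : a < 1) (n : ℕ) :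
    (∑' m : ℕ, (if n ≤ m then c * a ^ m else 0)) = c * a ^ n * (1 - a)⁻¹ := by
  have hinj : Function.Injective (fun k : ℕ => n + k) := fun x y h => by
    simpa using h
  have hsupp : Function.support (fun m : ℕ => if n ≤ m then c * a ^ m else 0)
      ⊆ Set.range (fun k : ℕ => n + k) := by
    intro m hm
    simp only [Function.mem_support] at hm
    by_cases h : n ≤ m
    · exact ⟨m - n, by simp; omega⟩
    · simp [h] at hm
  rw [← hinj.tsum_eq (f := fun m : ℕ => if n ≤ m then c * a ^ m else 0) hsupp]
  have heq : (fun k : ℕ => if n ≤ n + k then c * a ^ (n + k) else 0)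
      = fun k : ℕ => (c * a ^ n) * a ^ k := by
    funext k
    rw [if_pos (Nat.le_add_right n k), pow_add]; ring
  show (∑' k : ℕ, if n ≤ n + k then c * a ^ (n + k) else 0) = _
  rw [heq, tsum_mul_left, tsum_geometric_of_lt_one ha0 ha1]

private lemma geom_sq (r : ℝ) (hr0 : 0 ≤ r) (hr1 : r < 1) :
    (∑' n : ℕ, ((n : ℝ) + 1) * r ^ n) = 1 / (1 - r) ^ 2 := by
  have hr : ‖r‖ < 1 := by rwa [Real.norm_eq_abs, abs_of_nonneg hr0]
  have h1 : (∑' n : ℕ, (n : ℝ) * r ^ n) = r / (1 - r) ^ 2 :=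
    tsum_coe_mul_geometric_of_norm_lt_one hr
  have h2 : (∑' n : ℕ, r ^ n) = (1 - r)⁻¹ := tsum_geometric_of_lt_one hr0 hr1
  have hs1 : Summable (fun n : ℕ => (n : ℝ) * r ^ n) :=
    (summable_pow_mul_geometric_of_norm_lt_one 1 hr).congr (by intro n; push_cast; ring)
  have hs2 : Summable (fun n : ℕ => r ^ n) := summable_geometric_of_lt_one hr0 hr1
  have heq : (fun n : ℕ => ((n : ℝ) + 1) * r ^ n)
      = fun n : ℕ => (n : ℝ) * r ^ n + r ^ n := by funext n; ring
  rw [heq, Summable.tsum_add hs1 hs2, h1, h2]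
  have h1r : (1 : ℝ) - r ≠ 0 := by intro h; rw [sub_eq_zero] at h; exact absurd h.symm (ne_of_lt hr1)
  field_simp
  ring

set_option maxHeartbeats 1000000 in
private lemma double_sum (ξ μ a b : ℝ) (hξa : ξ = 1 - a) (ha0 : 0 ≤ a) (ha1 : a < 1)
    (hb0 : 0 ≤ b) (hb1 : b < 1) (hμ0 : 0 ≤ μ) (w : ℕ → ℝ) (hw0 : ∀ n, 0 ≤ w n)
    (hws : Summable (fun n : ℕ => w n * (μ * b ^ n))) :
    (∑' q : ℕ × ℕ, (if q.2 ≤ q.1 then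
        w q.2 * ((ξ * a ^ q.1) * (μ * b ^ q.2)) else 0))
    = ∑' n : ℕ, w n * (μ * (a * b) ^ n) := by
  have hξ0 : 0 ≤ ξ := by rw [hξa]; linarith
  set f : ℕ × ℕ → ℝ := fun q => if q.2 ≤ q.1 then
      w q.2 * ((ξ * a ^ q.1) * (μ * b ^ q.2)) else 0 with hf
  have hsa : Summable (fun m : ℕ => ξ * a ^ m) :=
    (summable_geometric_of_lt_one ha0 ha1).mul_left ξ
  have hbnn : ∀ n : ℕ, 0 ≤ w n * (μ * b ^ n) :=
    fun n => mul_nonneg (hw0 n) (mul_nonneg hμ0 (pow_nonneg hb0 n))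
  have hann : ∀ m : ℕ, 0 ≤ ξ * a ^ m := fun m => mul_nonneg hξ0 (pow_nonneg ha0 m)
  have hprod : Summable (fun p : ℕ × ℕ => (w p.1 * (μ * b ^ p.1)) * (ξ * a ^ p.2)) :=
    Summable.mul_of_nonneg hws hsa hbnn hann
  have key : ∀ p : ℕ × ℕ, 0 ≤ f (p.2, p.1) ∧
      f (p.2, p.1) ≤ (w p.1 * (μ * b ^ p.1)) * (ξ * a ^ p.2) := by
    intro p
    simp only [hf]
    by_cases h : p.1 ≤ p.2
    · rw [if_pos h]
      constructor
      · exact mul_nonneg (hw0 p.1) (mul_nonneg (hann p.2) (mul_nonneg hμ0 (pow_nonneg hb0 p.1)))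
      · apply le_of_eq; ring
    · rw [if_neg h]
      exact ⟨le_refl 0, mul_nonneg (hbnn p.1) (hann p.2)⟩
  have hswap : Summable (fun p : ℕ × ℕ => f (p.2, p.1)) :=
    hprod.of_nonneg_of_le (fun p => (key p).1) (fun p => (key p).2)
  have hsum : ∑' q : ℕ × ℕ, f q = ∑' p : ℕ × ℕ, f (p.2, p.1) :=
    ((Equiv.prodComm ℕ ℕ).tsum_eq f).symm
  rw [hsum, Summable.tsum_prod' hswap (fun n => by
    apply (hsa.mul_left (w n * (μ * b ^ n))).of_nonneg_of_le
    · intro m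
      simp only [hf]
      split
      · exact mul_nonneg (hw0 n) (mul_nonneg (hann m) (mul_nonneg hμ0 (pow_nonneg hb0 n)))
      · exact le_refl 0
    · intro m
      simp only [hf]
      split
      · apply le_of_eq; ring
      · exact mul_nonneg (hbnn n) (hann m))]
  congr 1
  funext n
  have heq : (fun m : ℕ => f (m, n)) = fun m : ℕ =>
      if n ≤ m then (w n * (ξ * (μ * b ^ n))) * a ^ m else 0 := by
    funext m
    simp only [hf]
    split
    · ring
    · rfl
  show (∑' m : ℕ, f (m, n)) = _
  rw [heq, geom_shift a _ ha0 ha1 n]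
  have hξne : ξ ≠ 0 ∨ True := Or.inr trivial
  have h1a : (1 : ℝ) - a ≠ 0 := by
    intro h; rw [sub_eq_zero] at h; exact absurd h.symm (ne_of_lt ha1)
  rw [hξa, mul_pow]
  field_simp

/-- LCFS-PR conditional peak AoI identity: for independent `M ~ Geo(ξ)`,
`N ~ Geo(μ)` with `ξ, μ ∈ (0,1)`,
`E[M]/P(N ≤ M) + E[N·1{N ≤ M}]/P(N ≤ M) − 1 = 1/ξ + 1/μ + 1/(1-(1-ξ)(1-μ)) − 2`. -/
theorem stmt_7 (ξ μ : ℝ) (hξ : ξ ∈ Set.Ioo (0:ℝ) 1) (hμ : μ ∈ Set.Ioo (0:ℝ) 1) :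
    (∑' m : ℕ, ((m : ℝ) + 1) * (ξ * (1 - ξ) ^ m))
        / (∑' q : ℕ × ℕ, (if q.2 ≤ q.1 then
            (ξ * (1 - ξ) ^ q.1) * (μ * (1 - μ) ^ q.2) else 0))
      + (∑' q : ℕ × ℕ, (if q.2 ≤ q.1 then
            ((q.2 : ℝ) + 1) * ((ξ * (1 - ξ) ^ q.1) * (μ * (1 - μ) ^ q.2)) else 0))
        / (∑' q : ℕ × ℕ, (if q.2 ≤ q.1 then
            (ξ * (1 - ξ) ^ q.1) * (μ * (1 - μ) ^ q.2) else 0))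
      - 1
    = 1 / ξ + 1 / μ + 1 / (1 - (1 - ξ) * (1 - μ)) - 2 := by
  obtain ⟨hξ0, hξ1⟩ := hξ
  obtain ⟨hμ0, hμ1⟩ := hμ
  have ha0 : (0:ℝ) ≤ 1 - ξ := by linarith
  have ha1 : (1:ℝ) - ξ < 1 := by linarith
  have hb0 : (0:ℝ) ≤ 1 - μ := by linarith
  have hb1 : (1:ℝ) - μ < 1 := by linarith
  have hab0 : (0:ℝ) ≤ (1 - ξ) * (1 - μ) := mul_nonneg ha0 hb0
  have hab1 : (1 - ξ) * (1 - μ) < 1 := by nlinarith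
  have hab : (1 : ℝ) - (1 - ξ) * (1 - μ) ≠ 0 := by intro h; nlinarith
  have hμne : μ ≠ 0 := ne_of_gt hμ0
  have hξne : ξ ≠ 0 := ne_of_gt hξ0
  -- first sum : E[M] = 1/ξ
  have h1 : (∑' m : ℕ, ((m : ℝ) + 1) * (ξ * (1 - ξ) ^ m)) = 1 / ξ := by
    have heq : (fun m : ℕ => ((m : ℝ) + 1) * (ξ * (1 - ξ) ^ m))
        = fun m : ℕ => ξ * (((m : ℝ) + 1) * (1 - ξ) ^ m) := by funext m; ring
    rw [heq, tsum_mul_left, geom_sq _ ha0 ha1]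
    have : (1 : ℝ) - (1 - ξ) = ξ := by ring
    rw [this]
    field_simp
  -- denominator : P(N ≤ M) = μ / (1 - (1-ξ)(1-μ))
  have hD : (∑' q : ℕ × ℕ, (if q.2 ≤ q.1 then
      (ξ * (1 - ξ) ^ q.1) * (μ * (1 - μ) ^ q.2) else 0))
      = μ / (1 - (1 - ξ) * (1 - μ)) := by
    have hd := double_sum ξ μ (1 - ξ) (1 - μ) (by ring) ha0 ha1 hb0 hb1 (le_of_lt hμ0)
      (fun _ => 1) (fun _ => zero_le_one)
      (by simpa using (summable_geometric_of_lt_one hb0 hb1).mul_left μ)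
    simp only [one_mul] at hd
    rw [hd]
    have heq : (fun n : ℕ => μ * ((1 - ξ) * (1 - μ)) ^ n)
        = fun n : ℕ => μ * ((1 - ξ) * (1 - μ)) ^ n := rfl
    rw [tsum_mul_left, tsum_geometric_of_lt_one hab0 hab1]
    rw [div_eq_mul_inv]
  -- numerator 2 : E[N·1{N≤M}] = μ / (1 - (1-ξ)(1-μ))²
  have hN : (∑' q : ℕ × ℕ, (if q.2 ≤ q.1 then
      ((q.2 : ℝ) + 1) * ((ξ * (1 - ξ) ^ q.1) * (μ * (1 - μ) ^ q.2)) else 0))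
      = μ / (1 - (1 - ξ) * (1 - μ)) ^ 2 := by
    have hws : Summable (fun n : ℕ => ((n : ℝ) + 1) * (μ * (1 - μ) ^ n)) :=
      ((summable_np1 _ hb0 hb1).mul_left μ).congr (by intro n; ring)
    have hd := double_sum ξ μ (1 - ξ) (1 - μ) (by ring) ha0 ha1 hb0 hb1 (le_of_lt hμ0)
      (fun n => (n : ℝ) + 1) (fun n => by positivity) hws
    rw [hd]
    have heq : (fun n : ℕ => ((n : ℝ) + 1) * (μ * ((1 - ξ) * (1 - μ)) ^ n))
        = fun n : ℕ => μ * (((n : ℝ) + 1) * ((1 - ξ) * (1 - μ)) ^ n) := by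
      funext n; ring
    rw [heq, tsum_mul_left, geom_sq _ hab0 hab1]
    field_simp
  rw [h1, hD, hN]
  field_simp
  ring
end

section
/- For a Geo/Geo/1 queue with arrival rate ξ and service rate μ satisfying 0 < ξ < μ ≤ 1, the FCFS average AoI A_F = 1/ξ + (1-ξ)/(μ-ξ) + ξ/μ − ξ/μ² − 1 is strictly decreasing in μ. -/
/-- The FCFS average AoI `A_F(μ) = 1/ξ + (1-ξ)/(μ-ξ) + ξ/μ − ξ/μ² − 1`
is strictly decreasing in the service rate `μ` on `(ξ, 1]`, for `0 < ξ < 1`. -/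
theorem stmt_8 (ξ : ℝ) (hξ : 0 < ξ) (hξ1 : ξ < 1) :
    StrictAntiOn (fun μ : ℝ =>
      1 / ξ + (1 - ξ) / (μ - ξ) + ξ / μ - ξ / μ ^ 2 - 1) (Set.Ioc ξ 1) := by
  intro a ha b hb hab
  obtain ⟨haξ, ha1⟩ := ha
  obtain ⟨hbξ, hb1⟩ := hb
  have h1 : 0 < a - ξ := by linarith
  have h2 : 0 < b - ξ := by linarith
  have ha0 : 0 < a := lt_trans hξ haξ
  have hb0 : 0 < b := lt_trans hξ hbξ
  simp only
  have e1 : (1 - ξ) / (a - ξ) + ξ / a - ξ / a ^ 2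
      = ((1 - ξ) * a ^ 2 + ξ * (a - 1) * (a - ξ)) / ((a - ξ) * a ^ 2) := by
    field_simp; ring
  have e2 : (1 - ξ) / (b - ξ) + ξ / b - ξ / b ^ 2
      = ((1 - ξ) * b ^ 2 + ξ * (b - 1) * (b - ξ)) / ((b - ξ) * b ^ 2) := by
    field_simp; ring
  have key : ((1 - ξ) * b ^ 2 + ξ * (b - 1) * (b - ξ)) / ((b - ξ) * b ^ 2)
      < ((1 - ξ) * a ^ 2 + ξ * (a - 1) * (a - ξ)) / ((a - ξ) * a ^ 2) := by
    rw [div_lt_div_iff₀ (by positivity) (by positivity)]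
    -- core inequality: (1-ξ) a² b² > ξ (a+b-ab)(a-ξ)(b-ξ)
    have s1 : b - ξ ≤ b * (1 - ξ) := by nlinarith
    have s2 : ξ * (a - ξ) ≤ a ^ 2 / 4 := by nlinarith [sq_nonneg (a - 2 * ξ)]
    have s3 : a + b - a * b < 4 * b := by nlinarith
    have spos : 0 < a + b - a * b := by nlinarith
    have step1 : ξ * (a + b - a * b) * (a - ξ) < a ^ 2 * b := by
      nlinarith [mul_le_mul_of_nonneg_right s2 (le_of_lt spos),
        mul_lt_mul_of_pos_left s3 (show (0:ℝ) < a ^ 2 / 4 by positivity)]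
    have hnum : 0 < (1 - ξ) * (a ^ 2 * b ^ 2)
        - ξ * (a + b - a * b) * ((a - ξ) * (b - ξ)) := by
      nlinarith [mul_pos (mul_pos hξ spos) h1, mul_lt_mul_of_pos_left step1 (show (0:ℝ) < b * (1 - ξ) by nlinarith)]
    nlinarith [mul_pos (sub_pos.2 hab) hnum]
  linarith [e1, e2, key]
end

section
/- For a Geo/Geo/1 queue with arrival rate ξ and service rate μ satisfying 0 < ξ < μ ≤ 1, the LCFS-PR average AoI satisfies 1/ξ + 1/μ − 1 ≤ 1/ξ + (1-ξ)/(μ-ξ) + ξ/μ − ξ/μ² − 1; that is, the LCFS-PR average AoI is at most the FCFS average AoI. -/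
/-- For a Geo/Geo/1 queue with `0 < ξ < μ ≤ 1`, the LCFS-PR average AoI
is at most the FCFS average AoI:
`1/ξ + 1/μ − 1 ≤ 1/ξ + (1-ξ)/(μ-ξ) + ξ/μ − ξ/μ² − 1`. -/
theorem stmt_9 (ξ μ : ℝ) (hξ : 0 < ξ) (hξμ : ξ < μ) (hμ : μ ≤ 1) :
    1 / ξ + 1 / μ - 1 ≤ 1 / ξ + (1 - ξ) / (μ - ξ) + ξ / μ - ξ / μ ^ 2 - 1 := by
  have hμ0 : 0 < μ := hξ.trans hξμ
  have hd : 0 < μ - ξ := by linarith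
  have key : 1 / μ ≤ (1 - ξ) / (μ - ξ) + ξ / μ - ξ / μ ^ 2 := by
    rw [div_add_div _ _ (ne_of_gt hd) (ne_of_gt hμ0), div_sub_div _ _ (by positivity) (by positivity), div_le_div_iff₀ hμ0 (by positivity)]
    nlinarith [mul_pos hξ hd, mul_nonneg (mul_nonneg hξ.le hd.le) (sub_nonneg.2 hμ), sq_nonneg ξ, sq_nonneg μ, mul_nonneg (mul_nonneg (mul_nonneg hξ.le hd.le) (sub_nonneg.2 hμ)) hμ0.le]
  linarith
end
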